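/- Let φ be a 3CNF formula with clauses C₁,…,C_m over variables var₁,…,var_n, and suppose ξ=⟨f₁,f₂,f₃,f₄⟩ is a positional distributed strategy on 𝒢(φ) that is reachability-winning from (S,S,S,S) to (var₁,var₁,var₁,OK₀). Then the three local strategies agree on every variable: for every i∈{1,…,n}, either f₁(var_i)=T_{var_i}, f₂(var_i)=T_{var_i} and f₃(var_i)=T_{var_i}, or f₁(var_i)=F_{var_i}, f₂(var_i)=F_{var_i} and f₃(var_i)=F_{var_i}. -/
import Mathlib


namespace DGame

/-- A literal: a variable index together with a sign (`true` = positive literal). -/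
abbrev Lit (n : ℕ) := Fin n × Bool

/-- A 3CNF clause: three literals. -/
abbrev Clause (n : ℕ) := Lit n × Lit n × Lit n

/-- A 3CNF formula `φ` with `m` clauses `C₁,…,C_m` over `n` variables `var₁,…,var_n`. -/
abbrev CNF (m n : ℕ) := Fin m → Clause n

/-- Evaluation of a clause under a truth assignment. -/
def Clause.eval {n : ℕ} (A : Fin n → Bool) (c : Clause n) : Bool :=
  (A c.1.1 == c.1.2) || (A c.2.1.1 == c.2.1.2) || (A c.2.2.1 == c.2.2.2)

/-- `A` is a satisfying truth assignment for `φ`. -/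
def CNF.Sat {m n : ℕ} (φ : CNF m n) (A : Fin n → Bool) : Prop :=
  ∀ i, Clause.eval A (φ i) = true

/-- Truth of clause `c` under an assignment `(a₁,a₂,a₃) ∈ {T,F}³` of its three
(literal positions') variables. -/
def Clause.evalTriple {n : ℕ} (c : Clause n) (a : Bool × Bool × Bool) : Bool :=
  (a.1 == c.1.2) || (a.2.1 == c.2.1.2) || (a.2.2 == c.2.2.2)

/-- Vertices of the local games `G₁, G₂, G₃`:
player-0 vertices `var j`, player-1 vertices `S`, `T j`, `F j`. -/
inductive LV (n : ℕ) : Type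
  | var (j : Fin n)
  | S
  | T (j : Fin n)
  | F (j : Fin n)
  deriving DecidableEq, Fintype

/-- Player-0 vertices of `G₁, G₂, G₃`. -/
def LV.IsP0 {n : ℕ} : LV n → Prop
  | .var _ => True
  | _ => False

/-- Local edges of `G₁, G₂, G₃`: `(var j, T j)` and `(var j, F j)`. -/
inductive LE {n : ℕ} : LV n → LV n → Prop
  | toT (j : Fin n) : LE (.var j) (.T j)
  | toF (j : Fin n) : LE (.var j) (.F j)

/-- Vertices of the local game `G₄`:
player-0 vertices `OK₀, NO₀, v_{j,0}`, player-1 vertices `S, OK₁, NO₁, v_{j,1}`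
(for `j = 1..m+n`). -/
inductive LV4 (m n : ℕ) : Type
  | OK0
  | NO0
  | v0 (j : Fin (m + n))
  | S
  | OK1
  | NO1
  | v1 (j : Fin (m + n))
  deriving DecidableEq, Fintype

/-- Player-0 vertices of `G₄`. -/
def LV4.IsP0 {m n : ℕ} : LV4 m n → Prop
  | .OK0 => True
  | .NO0 => True
  | .v0 _ => True
  | _ => False

/-- Local edges of `G₄`: `(v_{j,0}, v_{j,1})`, `(OK₀, OK₁)`, `(NO₀, NO₁)`. -/
inductive LE4 {m n : ℕ} : LV4 m n → LV4 m n → Prop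
  | mid (j : Fin (m + n)) : LE4 (.v0 j) (.v1 j)
  | ok : LE4 .OK0 .OK1
  | no : LE4 .NO0 .NO1

/-- Global vertices of the distributed game `𝒢(φ)`. -/
abbrev GV (m n : ℕ) := LV n × LV n × LV n × LV4 m n

/-- `𝒱₁`: global player-1 vertices (all components are local player-1 vertices).
All other global vertices form `𝒱₀`. -/
def GV.IsP1 {m n : ℕ} (x : GV m n) : Prop :=
  ¬ x.1.IsP0 ∧ ¬ x.2.1.IsP0 ∧ ¬ x.2.2.1.IsP0 ∧ ¬ x.2.2.2.IsP0

/-- The vertex `T j` or `F j` of `G₁,G₂,G₃` according to a boolean. -/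
def tf {n : ℕ} (a : Bool) (j : Fin n) : LV n := if a then .T j else .F j

/-- The initial state `(S,S,S,S)`. -/
def start (m n : ℕ) : GV m n := (.S, .S, .S, .S)

/-- The target state `(var₁, var₁, var₁, OK₀)`. -/
def tgt (m n : ℕ) [NeZero n] : GV m n := (.var 0, .var 0, .var 0, .OK0)

/-- The losing state `(var₁, var₁, var₁, NO₀)`. -/
def sink (m n : ℕ) [NeZero n] : GV m n := (.var 0, .var 0, .var 0, .NO0)

/-- The prescribed player-1 edges of the reduction game `𝒢(φ)` (types 1–5).
For the clause `Cᵢ`, the index of `v_i` in `G₄` is `i.castAdd n`; for the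
variable `var_j` the index of `v_{m+j}` is `Fin.natAdd m j`. -/
inductive E1 {m n : ℕ} [NeZero n] (φ : CNF m n) : GV m n → GV m n → Prop
  /-- (type 1) intention to check satisfaction of clause `Cᵢ`. -/
  | type1 (i : Fin m) :
      E1 φ (start m n)
        (.var (φ i).1.1, .var (φ i).2.1.1, .var (φ i).2.2.1, .v0 (i.castAdd n))
  /-- (type 2) intention to check consistency of variable `var_j`. -/
  | type2 (j : Fin n) :
      E1 φ (start m n) (.var j, .var j, .var j, .v0 (Fin.natAdd m j))
  /-- (type 3a) an assignment making clause `Cᵢ` true leads to the target. -/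
  | type3a (i : Fin m) (a : Bool × Bool × Bool)
      (h : Clause.evalTriple (φ i) a = true) :
      E1 φ (tf a.1 (φ i).1.1, tf a.2.1 (φ i).2.1.1, tf a.2.2 (φ i).2.2.1,
            .v1 (i.castAdd n)) (tgt m n)
  /-- (type 3b) an assignment making clause `Cᵢ` false leads to `NO₀`. -/
  | type3b (i : Fin m) (a : Bool × Bool × Bool)
      (h : Clause.evalTriple (φ i) a = false) :
      E1 φ (tf a.1 (φ i).1.1, tf a.2.1 (φ i).2.1.1, tf a.2.2 (φ i).2.2.1,
            .v1 (i.castAdd n)) (sink m n)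
  /-- (type 4a) consistent choices `(T,T,T)` or `(F,F,F)` lead to the target. -/
  | type4a (j : Fin n) (a : Bool) :
      E1 φ (tf a j, tf a j, tf a j, .v1 (Fin.natAdd m j)) (tgt m n)
  /-- (type 4b) the six mixed combinations lead to `NO₀`. -/
  | type4b (j : Fin n) (a : Bool × Bool × Bool)
      (h : ¬ (a.1 = a.2.1 ∧ a.2.1 = a.2.2)) :
      E1 φ (tf a.1 j, tf a.2.1 j, tf a.2.2 j, .v1 (Fin.natAdd m j)) (sink m n)
  /-- (type 5) continuous execution, `OK₁` side. -/
  | type5ok (j : Fin n) (a : Bool × Bool × Bool) :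
      E1 φ (tf a.1 j, tf a.2.1 j, tf a.2.2 j, .OK1) (tgt m n)
  /-- (type 5) continuous execution, `NO₁` side. -/
  | type5no (j : Fin n) (a : Bool × Bool × Bool) :
      E1 φ (tf a.1 j, tf a.2.1 j, tf a.2.2 j, .NO1) (sink m n)

/-- One-component step for player 0 in `G₁,G₂,G₃`: a player-0 component moves
along a local edge, a player-1 component stays put. -/
def lstep {n : ℕ} : LV n → LV n → Prop
  | .var j, v' => LE (.var j) v'
  | v, v' => v' = v

/-- One-component step for player 0 in `G₄`. -/
def lstep4 {m n : ℕ} : LV4 m n → LV4 m n → Prop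
  | .OK0, v' => LE4 .OK0 v'
  | .NO0, v' => LE4 .NO0 v'
  | .v0 j, v' => LE4 (.v0 j) v'
  | v, v' => v' = v

/-- The global edge relation `ℰ` of `𝒢(φ)`: from a player-1 vertex the
prescribed edges, from a player-0 vertex the componentwise moves. -/
def GE {m n : ℕ} [NeZero n] (φ : CNF m n) (x y : GV m n) : Prop :=
  (x.IsP1 ∧ E1 φ x y) ∨
  (¬ x.IsP1 ∧ lstep x.1 y.1 ∧ lstep x.2.1 y.2.1 ∧ lstep x.2.2.1 y.2.2.1 ∧
    lstep4 x.2.2.2 y.2.2.2)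

/-- A positional distributed strategy `ξ = ⟨f₁,f₂,f₃,f₄⟩` for player 0:
each `fᵢ` maps player-0 local vertices along local edges. -/
structure Strat (m n : ℕ) where
  f1 : LV n → LV n
  f2 : LV n → LV n
  f3 : LV n → LV n
  f4 : LV4 m n → LV4 m n
  h1 : ∀ j : Fin n, LE (.var j) (f1 (.var j))
  h2 : ∀ j : Fin n, LE (.var j) (f2 (.var j))
  h3 : ∀ j : Fin n, LE (.var j) (f3 (.var j))
  h4 : ∀ v : LV4 m n, v.IsP0 → LE4 v (f4 v)

/-- `x` has a successor in `𝒢(φ)`. -/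
def HasSucc {m n : ℕ} [NeZero n] (φ : CNF m n) (x : GV m n) : Prop :=
  ∃ y, GE φ x y

/-- A (maximal) play of `𝒢(φ)`, encoded as an infinite sequence which follows
edges of the game and stutters forever once a dead-end vertex is reached. -/
def IsPlay {m n : ℕ} [NeZero n] (φ : CNF m n) (π : ℕ → GV m n) : Prop :=
  ∀ k, (HasSucc φ (π k) → GE φ (π k) (π (k + 1))) ∧
       (¬ HasSucc φ (π k) → π (k + 1) = π k)

/-- The play `π` is consistent with the positional distributed strategy `ξ`:
at every player-0 vertex, every component in a local player-0 position moves
as prescribed by the corresponding local strategy. -/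
def Consistent {m n : ℕ} (ξ : Strat m n) (π : ℕ → GV m n) : Prop :=
  ∀ k, ¬ (π k).IsP1 →
    ((π k).1.IsP0 → (π (k + 1)).1 = ξ.f1 (π k).1) ∧
    ((π k).2.1.IsP0 → (π (k + 1)).2.1 = ξ.f2 (π k).2.1) ∧
    ((π k).2.2.1.IsP0 → (π (k + 1)).2.2.1 = ξ.f3 (π k).2.2.1) ∧
    ((π k).2.2.2.IsP0 → (π (k + 1)).2.2.2 = ξ.f4 (π k).2.2.2)

/-- `ξ` is reachability-winning from `init` to `goal`: every play starting at
`init` and consistent with `ξ` visits `goal`. -/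
def Winning {m n : ℕ} [NeZero n] (φ : CNF m n) (ξ : Strat m n)
    (init goal : GV m n) : Prop :=
  ∀ π : ℕ → GV m n, IsPlay φ π → Consistent ξ π → π 0 = init → ∃ k, π k = goal


/-- Auxiliary: the counterexample play. -/
def seq {α : Type*} (x0 x1 x2 x3 x4 : α) : ℕ → α
  | 0 => x0
  | 1 => x1
  | 2 => x2
  | (k+3) => if k % 2 = 0 then x3 else x4

lemma LE_inv {n : ℕ} {j : Fin n} {v : LV n} (h : LE (.var j) v) :
    ∃ b, v = tf b j := by
  cases h
  · exact ⟨true, rfl⟩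
  · exact ⟨false, rfl⟩

lemma LE4_v0_inv {m n : ℕ} {j : Fin (m+n)} {v : LV4 m n}
    (h : LE4 (.v0 j) v) : v = .v1 j := by cases h; rfl

lemma LE4_no_inv {m n : ℕ} {v : LV4 m n} (h : LE4 .NO0 v) : v = .NO1 := by
  cases h; rfl

lemma tf_not_p0 {n : ℕ} (a : Bool) (j : Fin n) : ¬ (tf a j).IsP0 := by
  cases a <;> simp [tf, LV.IsP0]

lemma start_isP1 {m n : ℕ} : (start m n).IsP1 := by
  exact ⟨fun h => h, fun h => h, fun h => h, fun h => h⟩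

/-- If `ξ = ⟨f₁,f₂,f₃,f₄⟩` is a positional distributed
strategy on `𝒢(φ)` which is reachability-winning from `(S,S,S,S)` to
`(var₁,var₁,var₁,OK₀)`, then the three local strategies agree on every
variable: for each `i`, either all three map `var_i` to `T_i`, or all three
map `var_i` to `F_i`. -/
theorem winning_strategy_local_strategies_agree
    {m n : ℕ} [NeZero n] (φ : CNF m n) (ξ : Strat m n)
    (hwin : Winning φ ξ (start m n) (tgt m n)) :
    ∀ i : Fin n,
      (ξ.f1 (.var i) = LV.T i ∧ ξ.f2 (.var i) = LV.T i ∧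
        ξ.f3 (.var i) = LV.T i) ∨
      (ξ.f1 (.var i) = LV.F i ∧ ξ.f2 (.var i) = LV.F i ∧
        ξ.f3 (.var i) = LV.F i) := by
  intro i
  obtain ⟨b1, hb1⟩ := LE_inv (ξ.h1 i)
  obtain ⟨b2, hb2⟩ := LE_inv (ξ.h2 i)
  obtain ⟨b3, hb3⟩ := LE_inv (ξ.h3 i)
  by_cases hagree : b1 = b2 ∧ b2 = b3
  · obtain ⟨h12, h23⟩ := hagree
    subst h12; subst h23
    cases b1
    · right; exact ⟨hb1, hb2, hb3⟩
    · left; exact ⟨hb1, hb2, hb3⟩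
  · exfalso
    obtain ⟨c1, hc1⟩ := LE_inv (ξ.h1 (0 : Fin n))
    obtain ⟨c2, hc2⟩ := LE_inv (ξ.h2 (0 : Fin n))
    obtain ⟨c3, hc3⟩ := LE_inv (ξ.h3 (0 : Fin n))
    set π : ℕ → GV m n := seq (start m n)
      (.var i, .var i, .var i, .v0 (Fin.natAdd m i))
      (tf b1 i, tf b2 i, tf b3 i, .v1 (Fin.natAdd m i))
      (sink m n)
      (tf c1 0, tf c2 0, tf c3 0, .NO1) with hπ
    have hP2P1 : GV.IsP1 ((tf b1 i, tf b2 i, tf b3 i,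
        (.v1 (Fin.natAdd m i) : LV4 m n)) : GV m n) :=
      ⟨tf_not_p0 _ _, tf_not_p0 _ _, tf_not_p0 _ _, fun h => h⟩
    have hNP1 : GV.IsP1 ((tf c1 0, tf c2 0, tf c3 0,
        (.NO1 : LV4 m n)) : GV m n) :=
      ⟨tf_not_p0 _ _, tf_not_p0 _ _, tf_not_p0 _ _, fun h => h⟩
    have hGE : ∀ k, GE φ (π k) (π (k + 1)) := by
      intro k
      rcases k with _ | _ | _ | k
      · exact Or.inl ⟨start_isP1, E1.type2 i⟩
      · refine Or.inr ⟨fun h => h.1 trivial, ?_, ?_, ?_, ?_⟩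
        · exact show LE (.var i) (tf b1 i) from hb1 ▸ ξ.h1 i
        · exact show LE (.var i) (tf b2 i) from hb2 ▸ ξ.h2 i
        · exact show LE (.var i) (tf b3 i) from hb3 ▸ ξ.h3 i
        · exact LE4.mid _
      · exact Or.inl ⟨hP2P1, E1.type4b i (b1, b2, b3) hagree⟩
      · rcases Nat.even_or_odd k with he | ho
        · have hk2 : k % 2 = 0 := Nat.even_iff.mp he
          have hk2' : (k + 1) % 2 = 1 := by omega
          have e1 : π (k + 3) = sink m n := by
            rw [hπ]; show (if k % 2 = 0 then _ else _) = _; rw [if_pos hk2]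
          have e2 : π (k + 3 + 1) = (tf c1 0, tf c2 0, tf c3 0,
              (.NO1 : LV4 m n)) := by
            rw [hπ]
            show (if (k + 1) % 2 = 0 then _ else _) = _
            rw [if_neg (by omega)]
          rw [e1, e2]
          refine Or.inr ⟨fun h => h.1 trivial, ?_, ?_, ?_, ?_⟩
          · exact show LE (.var 0) (tf c1 0) from hc1 ▸ ξ.h1 0
          · exact show LE (.var 0) (tf c2 0) from hc2 ▸ ξ.h2 0
          · exact show LE (.var 0) (tf c3 0) from hc3 ▸ ξ.h3 0
          · exact LE4.no
        · have hk2 : k % 2 = 1 := Nat.odd_iff.mp ho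
          have e1 : π (k + 3) = (tf c1 0, tf c2 0, tf c3 0,
              (.NO1 : LV4 m n)) := by
            rw [hπ]; show (if k % 2 = 0 then _ else _) = _
            rw [if_neg (by omega)]
          have e2 : π (k + 3 + 1) = sink m n := by
            rw [hπ]
            show (if (k + 1) % 2 = 0 then _ else _) = _
            rw [if_pos (by omega)]
          rw [e1, e2]
          exact Or.inl ⟨hNP1, E1.type5no 0 (c1, c2, c3)⟩
    have hplay : IsPlay φ π :=
      fun k => ⟨fun _ => hGE k, fun hns => absurd ⟨_, hGE k⟩ hns⟩
    have hcons : Consistent ξ π := by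
      intro k hk
      rcases k with _ | _ | _ | k
      · exact absurd start_isP1 hk
      · refine ⟨fun _ => hb1.symm, fun _ => hb2.symm, fun _ => hb3.symm,
          fun _ => ?_⟩
        exact (LE4_v0_inv (ξ.h4 (.v0 (Fin.natAdd m i)) trivial)).symm
      · exact absurd hP2P1 hk
      · rcases Nat.even_or_odd k with he | ho
        · have hk2 : k % 2 = 0 := Nat.even_iff.mp he
          have e1 : π (k + 3) = sink m n := by
            rw [hπ]; show (if k % 2 = 0 then _ else _) = _; rw [if_pos hk2]
          have e2 : π (k + 3 + 1) = (tf c1 0, tf c2 0, tf c3 0,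
              (.NO1 : LV4 m n)) := by
            rw [hπ]
            show (if (k + 1) % 2 = 0 then _ else _) = _
            rw [if_neg (by omega)]
          rw [e1, e2]
          exact ⟨fun _ => hc1.symm, fun _ => hc2.symm, fun _ => hc3.symm,
            fun _ => (LE4_no_inv (ξ.h4 .NO0 trivial)).symm⟩
        · have hk2 : k % 2 = 1 := Nat.odd_iff.mp ho
          have e1 : π (k + 3) = (tf c1 0, tf c2 0, tf c3 0,
              (.NO1 : LV4 m n)) := by
            rw [hπ]; show (if k % 2 = 0 then _ else _) = _
            rw [if_neg (by omega)]
          rw [e1] at hk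
          exact absurd hNP1 hk
    obtain ⟨K, hK⟩ := hwin π hplay hcons rfl
    have hne : ∀ k, π k ≠ tgt m n := by
      intro k
      rcases k with _ | _ | _ | k
      · simp [hπ, seq, start, tgt]
      · simp [hπ, seq, tgt]
      · simp [hπ, seq, tgt]
      · have : π (k + 3) = if k % 2 = 0 then sink m n
            else (tf c1 0, tf c2 0, tf c3 0, (.NO1 : LV4 m n)) := by
          rw [hπ]; rfl
        rw [this]
        split <;> simp [sink, tgt]
    exact hne K hK

end DGame
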